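/- arXiv:1912.06975 — 7 statements merged into one kernel-verified Lean document; each statement's English description precedes it below -/
import Mathlib

section
/- Assume Condition (9), i.e., R_s/R_D2D < P_s/(P_Rx + P_Tx). Then the cost function C is submodular: for all coalitions S1, S2 ⊆ N, C(S1) + C(S2) ≥ C(S1 ∪ S2) + C(S1 ∩ S2). -/
/-!
`C(S)` depends only on `k = #(S ∩ D)`, through a function of `k` whose increments are
`c, t + r, r, r, …` with `c = Ps / Rs`, `t = PTx / RD2D`, `r = PRx / RD2D`. Condition (9) says
exactly that `t + r ≤ c`, so the increments are nonincreasing, i.e. the function is concave on `ℕ`.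
A concave function of the cardinality of `S ∩ D` is submodular in `S`.
-/

open Finset

/-- The minimum total energy cost `C(S)` of a coalition `S`. -/
noncomputable def Ccost {α : Type*} [DecidableEq α]
    (Ps Rs PTx PRx RD2D : ℝ) (D S : Finset α) : ℝ :=
  if (S ∩ D) = ∅ then 0
  else if (S ∩ D).card = 1 then Ps / Rs
  else Ps / Rs + PTx / RD2D + (((S ∩ D).card : ℝ) - 1) * (PRx / RD2D)

section ConcaveOfCard

variable {β : Type*} [AddCommGroup β] [LinearOrder β] [IsOrderedAddMonoid β] {g : ℕ → β}

theorem add_le_add_of_antitone_sub (hg : Antitone fun n => g (n + 1) - g n)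
    {i a : ℕ} (hia : i ≤ a) (m : ℕ) : g (a + m) + g i ≤ g a + g (i + m) := by
  induction m with
  | zero => rfl
  | succ m ih =>
    have hstep : g (a + m + 1) - g (a + m) ≤ g (i + m + 1) - g (i + m) :=
      hg (Nat.add_le_add_right hia m)
    calc g (a + m + 1) + g i
        = (g (a + m + 1) - g (a + m)) + (g (a + m) + g i) := by abel
      _ ≤ (g (i + m + 1) - g (i + m)) + (g a + g (i + m)) := add_le_add hstep ih
      _ = g a + g (i + m + 1) := by abel

theorem card_union_submodular {α : Type*} [DecidableEq α]
    (hg : Antitone fun n => g (n + 1) - g n) (A B : Finset α) :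
    g #(A ∪ B) + g #(A ∩ B) ≤ g #A + g #B := by
  obtain ⟨m, hB⟩ := Nat.exists_eq_add_of_le (card_le_card (inter_subset_right : A ∩ B ⊆ B))
  have hAB : #(A ∪ B) = #A + m := by have := card_union_add_card_inter A B; omega
  rw [hAB, hB]
  exact add_le_add_of_antitone_sub hg (card_le_card inter_subset_left) m

end ConcaveOfCard

noncomputable def cardCost (c t r : ℝ) : ℕ → ℝ
  | 0 => 0
  | 1 => c
  | n + 2 => c + t + (n + 1) * r

theorem cardCost_sub_antitone {c t r : ℝ} (ht : 0 ≤ t) (hc : t + r ≤ c) :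
    Antitone fun n => cardCost c t r (n + 1) - cardCost c t r n := by
  refine antitone_nat_of_succ_le fun n => ?_
  rcases n with _ | _ | n <;> simp only [cardCost] <;> push_cast <;> linarith

theorem Ccost_eq_cardCost {α : Type*} [DecidableEq α] (Ps Rs PTx PRx RD2D : ℝ)
    (D S : Finset α) :
    Ccost Ps Rs PTx PRx RD2D D S = cardCost (Ps / Rs) (PTx / RD2D) (PRx / RD2D) #(S ∩ D) := by
  unfold Ccost
  rcases h : #(S ∩ D) with _ | _ | n
  · simp [← card_eq_zero, h, cardCost]
  · simp [← card_eq_zero, h, cardCost]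
  · simp only [← card_eq_zero, h, cardCost]
    push_cast
    ring_nf

theorem Ccost_submodular_general
    {α : Type*} [DecidableEq α]
    (Ps Rs PTx PRx RD2D : ℝ)
    (hRs : 0 < Rs) (hPTx : 0 < PTx) (hPRx : 0 < PRx)
    (hRD2D : 0 < RD2D)
    (h9 : Rs / RD2D < Ps / (PRx + PTx))
    (D : Finset α) (S1 S2 : Finset α) :
    Ccost Ps Rs PTx PRx RD2D D S1 + Ccost Ps Rs PTx PRx RD2D D S2 ≥
      Ccost Ps Rs PTx PRx RD2D D (S1 ∪ S2) + Ccost Ps Rs PTx PRx RD2D D (S1 ∩ S2) := by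
  have hc : PTx / RD2D + PRx / RD2D ≤ Ps / Rs := by
    rw [div_lt_div_iff₀ hRD2D (by positivity)] at h9
    rw [← add_div, div_le_div_iff₀ hRD2D hRs]
    linarith
  simp only [Ccost_eq_cardCost]
  rw [union_inter_distrib_right, inter_inter_distrib_right]
  exact card_union_submodular (cardCost_sub_antitone (div_pos hPTx hRD2D).le hc) _ _

/-- under Condition (9), the cost function `C` is submodular:
`C(S1) + C(S2) ≥ C(S1 ∪ S2) + C(S1 ∩ S2)` for all coalitions `S1, S2`. -/
theorem Ccost_submodular
    {α : Type*} [Fintype α] [DecidableEq α]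
    (Ps Rs PTx PRx RD2D : ℝ)
    (hPs : 0 < Ps) (hRs : 0 < Rs) (hPTx : 0 < PTx) (hPRx : 0 < PRx)
    (hRD2D : 0 < RD2D)
    (h9 : Rs / RD2D < Ps / (PRx + PTx))
    (D : Finset α) (S1 S2 : Finset α) :
    Ccost Ps Rs PTx PRx RD2D D S1 + Ccost Ps Rs PTx PRx RD2D D S2 ≥
      Ccost Ps Rs PTx PRx RD2D D (S1 ∪ S2) + Ccost Ps Rs PTx PRx RD2D D (S1 ∩ S2) :=
  Ccost_submodular_general Ps Rs PTx PRx RD2D hRs hPTx hPRx hRD2D h9 D S1 S2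
end

section
/- Assume Condition (9), i.e., R_s/R_D2D < P_s/(P_Rx + P_Tx). If S1, S2 ⊆ N are disjoint coalitions with S1 ∩ D ≠ ∅ and S2 ∩ D ≠ ∅, then C(S1) + C(S2) > C(S1 ∪ S2); that is, strictly less energy is expended when the two groups of requesting users cooperate in a single coalition than when they operate separately. -/
/-!
Only the number `k = |S ∩ D|` of requesting users matters. For `k ≥ 1` the cost lies between
`Ps/Rs + (k - 1) PRx/RD2D` and `Ps/Rs + PTx/RD2D + (k - 1) PRx/RD2D`, the lower bound being
attained for `k = 1`. Summing the lower bounds for `S1` and `S2` and comparing with the upper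
bound for `S1 ∪ S2`, where the counts add up, the gain from merging is at least
`Ps/Rs - (PTx + PRx)/RD2D`, which is positive by Condition (9).
-/

open Finset

section Bounds

variable {α : Type*} [DecidableEq α] {Ps Rs PTx PRx RD2D : ℝ} {D S : Finset α}

lemma Ccost_le_of_nonempty (hS : (S ∩ D).Nonempty) (hT : 0 ≤ PTx / RD2D) :
    Ccost Ps Rs PTx PRx RD2D D S ≤
      Ps / Rs + PTx / RD2D + (((S ∩ D).card : ℝ) - 1) * (PRx / RD2D) := by
  rw [Ccost, if_neg hS.ne_empty]
  split_ifs with hone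
  · simpa [hone] using hT
  · exact le_rfl

lemma le_Ccost_of_nonempty (hS : (S ∩ D).Nonempty) (hT : 0 ≤ PTx / RD2D) :
    Ps / Rs + (((S ∩ D).card : ℝ) - 1) * (PRx / RD2D) ≤ Ccost Ps Rs PTx PRx RD2D D S := by
  rw [Ccost, if_neg hS.ne_empty]
  split_ifs with hone
  · simp [hone]
  · linarith

end Bounds

theorem Ccost_strict_merge_gain_general
    {α : Type*} [DecidableEq α]
    (Ps Rs PTx PRx RD2D : ℝ)
    (hRs : 0 < Rs) (hPTx : 0 < PTx) (hPRx : 0 < PRx)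
    (hRD2D : 0 < RD2D)
    (h9 : Rs / RD2D < Ps / (PRx + PTx))
    (D : Finset α) (S1 S2 : Finset α)
    (hdisj : Disjoint S1 S2)
    (h1 : (S1 ∩ D).Nonempty) (h2 : (S2 ∩ D).Nonempty) :
    Ccost Ps Rs PTx PRx RD2D D S1 + Ccost Ps Rs PTx PRx RD2D D S2 >
      Ccost Ps Rs PTx PRx RD2D D (S1 ∪ S2) := by
  have hgain : PRx / RD2D + PTx / RD2D < Ps / Rs := by
    rw [div_lt_div_iff₀ hRD2D (by positivity)] at h9
    rw [← add_div, div_lt_div_iff₀ hRD2D hRs]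
    linarith
  have hcard : (((S1 ∪ S2) ∩ D).card : ℝ) = (S1 ∩ D).card + (S2 ∩ D).card := by
    rw [union_inter_distrib_right,
      card_union_of_disjoint (hdisj.mono inter_subset_left inter_subset_left), Nat.cast_add]
  have hT : 0 ≤ PTx / RD2D := by positivity
  have hU := Ccost_le_of_nonempty (Ps := Ps) (Rs := Rs) (PRx := PRx) (S := S1 ∪ S2)
    (h1.mono (inter_subset_inter_right subset_union_left)) hT
  have hL1 := le_Ccost_of_nonempty (Ps := Ps) (Rs := Rs) (PRx := PRx) h1 hT
  have hL2 := le_Ccost_of_nonempty (Ps := Ps) (Rs := Rs) (PRx := PRx) h2 hT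
  rw [hcard] at hU
  linarith

/-- under Condition (9), if `S1, S2` are disjoint coalitions each containing
at least one requesting user, then `C(S1) + C(S2) > C(S1 ∪ S2)`: strictly less energy is
expended when the two groups cooperate in a single coalition. -/
theorem Ccost_strict_merge_gain
    {α : Type*} [Fintype α] [DecidableEq α]
    (Ps Rs PTx PRx RD2D : ℝ)
    (hPs : 0 < Ps) (hRs : 0 < Rs) (hPTx : 0 < PTx) (hPRx : 0 < PRx)
    (hRD2D : 0 < RD2D)
    (h9 : Rs / RD2D < Ps / (PRx + PTx))
    (D : Finset α) (S1 S2 : Finset α)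
    (hdisj : Disjoint S1 S2)
    (h1 : (S1 ∩ D).Nonempty) (h2 : (S2 ∩ D).Nonempty) :
    Ccost Ps Rs PTx PRx RD2D D S1 + Ccost Ps Rs PTx PRx RD2D D S2 >
      Ccost Ps Rs PTx PRx RD2D D (S1 ∪ S2) :=
  Ccost_strict_merge_gain_general Ps Rs PTx PRx RD2D hRs hPTx hPRx hRD2D h9 D S1 S2 hdisj h1 h2
end

section
/- Assume Condition (9), i.e., R_s/R_D2D < P_s/(P_Rx + P_Tx). Given valuations U : N → ℝ, define the value of a coalition S ⊆ N by v(S) = ∑_{i ∈ S∩D} U_i − C(S). Then v is supermodular (the game is convex): for all S1, S2 ⊆ N, v(S1) + v(S2) ≤ v(S1 ∪ S2) + v(S1 ∩ S2). -/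
open Finset

/-! The cost depends on `S` only through `n = |S ∩ D|`, and as a function of `n` its increments
are `P_s/R_s`, then `(P_Tx + P_Rx)/R_D2D`, then `P_Rx/R_D2D` forever. Condition (9) makes the
first increment exceed the second and `P_Tx > 0` the second exceed the third, so the cost is a
concave function of `|S ∩ D|`, hence submodular in `S`, while the valuation part is modular. -/

section ConcaveOfCard

variable {g : ℕ → ℝ}

theorem sub_le_sub_of_antitone_increments (hg : Antitone fun n ↦ g (n + 1) - g n)
    {b c : ℕ} (hcb : c ≤ b) (d : ℕ) :
    g (b + d) - g b ≤ g (c + d) - g c := by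
  have telescope (m : ℕ) : ∑ k ∈ range d, (g (m + (k + 1)) - g (m + k)) = g (m + d) - g m := by
    simpa using sum_range_sub (fun k ↦ g (m + k)) d
  rw [← telescope b, ← telescope c]
  exact sum_le_sum fun k _ ↦ hg (by omega : c + k ≤ b + k)

theorem card_union_add_card_inter_le_of_antitone_increments {α : Type*} [DecidableEq α]
    (hg : Antitone fun n ↦ g (n + 1) - g n) (s t : Finset α) :
    g #(s ∪ t) + g #(s ∩ t) ≤ g #s + g #t := by
  have hinter_le := card_le_card (inter_subset_left : s ∩ t ⊆ s)
  have hunion : #(s ∪ t) = #t + (#s - #(s ∩ t)) := by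
    have := card_union_add_card_inter s t
    omega
  have hs : #s = #(s ∩ t) + (#s - #(s ∩ t)) := by omega
  have := sub_le_sub_of_antitone_increments hg (card_le_card (inter_subset_right : s ∩ t ⊆ t))
    (#s - #(s ∩ t))
  rw [← hunion, ← hs] at this
  linarith

end ConcaveOfCard

section Cost

variable (Ps Rs PTx PRx RD2D : ℝ)

noncomputable def costOfCount (n : ℕ) : ℝ :=
  if n = 0 then 0
  else if n = 1 then Ps / Rs
  else Ps / Rs + PTx / RD2D + ((n : ℝ) - 1) * (PRx / RD2D)

theorem Ccost_eq_costOfCount {α : Type*} [DecidableEq α] (D S : Finset α) :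
    Ccost Ps Rs PTx PRx RD2D D S = costOfCount Ps Rs PTx PRx RD2D #(S ∩ D) := by
  simp [Ccost, costOfCount, card_eq_zero]

theorem costOfCount_succ_sub (n : ℕ) :
    costOfCount Ps Rs PTx PRx RD2D (n + 1) - costOfCount Ps Rs PTx PRx RD2D n =
      if n = 0 then Ps / Rs else if n = 1 then (PTx + PRx) / RD2D else PRx / RD2D := by
  rcases n with _ | _ | n
  · simp [costOfCount]
  · norm_num [costOfCount]; ring
  · simp [costOfCount]; ring

variable {Ps Rs PTx PRx RD2D}

theorem antitone_costOfCount_increments (hPTx : 0 ≤ PTx)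
    (hstep : (PTx + PRx) / RD2D ≤ Ps / Rs) (hRD2D : 0 < RD2D) :
    Antitone fun n ↦ costOfCount Ps Rs PTx PRx RD2D (n + 1) - costOfCount Ps Rs PTx PRx RD2D n := by
  refine antitone_nat_of_succ_le fun n ↦ ?_
  simp only [costOfCount_succ_sub]
  rcases n with _ | _ | n
  · simpa using hstep
  · norm_num
    gcongr
    linarith
  · simp

end Cost

theorem value_supermodular_general
    {α : Type*} [DecidableEq α]
    (Ps Rs PTx PRx RD2D : ℝ)
    (hRs : 0 < Rs) (hPTx : 0 < PTx) (hPRx : 0 < PRx)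
    (hRD2D : 0 < RD2D)
    (h9 : Rs / RD2D < Ps / (PRx + PTx))
    (D : Finset α) (U : α → ℝ)
    (v : Finset α → ℝ)
    (hv : ∀ S : Finset α, v S = (∑ i ∈ S ∩ D, U i) - Ccost Ps Rs PTx PRx RD2D D S)
    (S1 S2 : Finset α) :
    v S1 + v S2 ≤ v (S1 ∪ S2) + v (S1 ∩ S2) := by
  have hstep : (PTx + PRx) / RD2D ≤ Ps / Rs := by
    rw [div_lt_div_iff₀ hRD2D (by positivity)] at h9
    rw [div_le_div_iff₀ hRD2D hRs]
    linarith
  have hcost := card_union_add_card_inter_le_of_antitone_increments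
    (antitone_costOfCount_increments hPTx.le hstep hRD2D) (S1 ∩ D) (S2 ∩ D)
  have hsum := sum_union_inter (s₁ := S1 ∩ D) (s₂ := S2 ∩ D) (f := U)
  rw [← union_inter_distrib_right, ← inter_inter_distrib_right] at hcost hsum
  simp only [hv, Ccost_eq_costOfCount]
  linarith

/-- under Condition (9), the value function
`v(S) = ∑_{i ∈ S ∩ D} U_i − C(S)` is supermodular (the game is convex). -/
theorem value_supermodular
    {α : Type*} [Fintype α] [DecidableEq α]
    (Ps Rs PTx PRx RD2D : ℝ)
    (hPs : 0 < Ps) (hRs : 0 < Rs) (hPTx : 0 < PTx) (hPRx : 0 < PRx)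
    (hRD2D : 0 < RD2D)
    (h9 : Rs / RD2D < Ps / (PRx + PTx))
    (D : Finset α) (U : α → ℝ)
    (v : Finset α → ℝ)
    (hv : ∀ S : Finset α, v S = (∑ i ∈ S ∩ D, U i) - Ccost Ps Rs PTx PRx RD2D D S)
    (S1 S2 : Finset α) :
    v S1 + v S2 ≤ v (S1 ∪ S2) + v (S1 ∩ S2) :=
  value_supermodular_general Ps Rs PTx PRx RD2D hRs hPTx hPRx hRD2D h9 D U v hv S1 S2
end

section
/- (Lemma 2, superadditivity for compatible collections.) Assume Condition (9), i.e., R_s/R_D2D < P_s/(P_Rx + P_Tx). Given valuations U : N → ℝ, define v(S) = ∑_{i ∈ S∩D} U_i − C(S) for every S ⊆ N (so v(∅) = 0). Then v is superadditive over disjoint unions: for any k ≥ 1 and any pairwise disjoint nonempty subsets S_1, …, S_k of N, v(S_1 ∪ ⋯ ∪ S_k) ≥ ∑_{i=1}^k v(S_i). -/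
/-!
The utility term of `v` is additive over disjoint unions, so it suffices that the cost is
subadditive. The cost depends only on the number `n` of destinations in a coalition, and as a
function of `n` it is subadditive because, by Condition (9), the base-station download `P_s/R_s`
paid by a second coalition exceeds what relaying to it would cost, `(P_Tx + P_Rx)/R_D2D`.
-/

open Finset

/-- `Ccost` as a function of `n = #(S ∩ D)`, with `a = P_s/R_s`, `b = P_Tx/R_D2D`,
`c = P_Rx/R_D2D`. -/
noncomputable def costOfCard (a b c : ℝ) : ℕ → ℝ
  | 0 => 0
  | 1 => a
  | n + 2 => a + b + (n + 1) * c

lemma costOfCard_add_le {a b c : ℝ} (hb : 0 ≤ b) (hbc : b + c ≤ a) (m n : ℕ) :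
    costOfCard a b c (m + n) ≤ costOfCard a b c m + costOfCard a b c n := by
  rcases m with _ | _ | m <;> rcases n with _ | _ | n <;>
    simp only [costOfCard, zero_add, add_zero, ← add_assoc, le_refl, Nat.add_eq] <;>
    push_cast <;> linarith

section Cost

variable {α : Type*} [DecidableEq α] (Ps Rs PTx PRx RD2D : ℝ) (D : Finset α)

lemma Ccost_eq_costOfCard (S : Finset α) :
    Ccost Ps Rs PTx PRx RD2D D S = costOfCard (Ps / Rs) (PTx / RD2D) (PRx / RD2D) #(S ∩ D) := by
  rcases h : #(S ∩ D) with _ | _ | n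
  · simp [Ccost, costOfCard, card_eq_zero.mp h]
  · simp [Ccost, costOfCard, h, ← card_eq_zero]
  · have hne : S ∩ D ≠ ∅ := by rw [Ne, ← card_eq_zero, h]; omega
    simp only [Ccost, costOfCard, hne, h, if_false, Nat.reduceEqDiff]
    push_cast
    ring

lemma Ccost_sup_le {ι : Type*} (hb : 0 ≤ PTx / RD2D) (hbc : PTx / RD2D + PRx / RD2D ≤ Ps / Rs)
    {s : Finset ι} {S : ι → Finset α} (hS : (s : Set ι).PairwiseDisjoint S) :
    Ccost Ps Rs PTx PRx RD2D D (s.sup S) ≤ ∑ i ∈ s, Ccost Ps Rs PTx PRx RD2D D (S i) := by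
  have hSD : (s : Set ι).PairwiseDisjoint fun i ↦ S i ∩ D := hS.mono fun _ ↦ inter_subset_left
  simp only [Ccost_eq_costOfCard, sup_eq_biUnion, biUnion_inter, card_biUnion hSD]
  exact le_sum_of_subadditive _ le_rfl (costOfCard_add_le hb hbc) _ _

end Cost

lemma sum_sup_inter {α ι M : Type*} [DecidableEq α] [AddCommMonoid M] {s : Finset ι}
    {S : ι → Finset α} (hS : (s : Set ι).PairwiseDisjoint S) (D : Finset α) (f : α → M) :
    ∑ x ∈ s.sup S ∩ D, f x = ∑ i ∈ s, ∑ x ∈ S i ∩ D, f x := by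
  rw [sup_eq_biUnion, biUnion_inter, sum_biUnion (hS.mono fun _ ↦ inter_subset_left)]

theorem value_superadditive_general
    {α : Type*} [DecidableEq α]
    (Ps Rs PTx PRx RD2D : ℝ)
    (hRs : 0 < Rs) (hPTx : 0 < PTx) (hPRx : 0 < PRx)
    (hRD2D : 0 < RD2D)
    (h9 : Rs / RD2D < Ps / (PRx + PTx))
    (D : Finset α) (U : α → ℝ)
    (v : Finset α → ℝ)
    (hv : ∀ S : Finset α, v S = (∑ i ∈ S ∩ D, U i) - Ccost Ps Rs PTx PRx RD2D D S)
    (k : ℕ) (S : Fin k → Finset α)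
    (hdisj : ∀ i j, i ≠ j → Disjoint (S i) (S j)) :
    v (Finset.univ.sup S) ≥ ∑ i : Fin k, v (S i) := by
  have hS : ((univ : Finset (Fin k)) : Set (Fin k)).PairwiseDisjoint S :=
    fun i _ j _ hij ↦ hdisj i j hij
  have hbc : PTx / RD2D + PRx / RD2D ≤ Ps / Rs := by
    rw [div_lt_div_iff₀ hRD2D (add_pos hPRx hPTx)] at h9
    rw [← add_div, div_le_div_iff₀ hRD2D hRs]
    linarith
  have hcost := Ccost_sup_le Ps Rs PTx PRx RD2D D (div_pos hPTx hRD2D).le hbc hS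
  simp only [hv, sum_sub_distrib, sum_sup_inter hS]
  linarith

/-- Lemma 2: under Condition (9), the value function
`v(S) = ∑_{i ∈ S ∩ D} U_i − C(S)` is superadditive over disjoint unions: for any `k ≥ 1`
and pairwise disjoint nonempty coalitions `S_1, …, S_k`,
`v(S_1 ∪ ⋯ ∪ S_k) ≥ ∑_{i=1}^k v(S_i)`. -/
theorem value_superadditive
    {α : Type*} [Fintype α] [DecidableEq α]
    (Ps Rs PTx PRx RD2D : ℝ)
    (hPs : 0 < Ps) (hRs : 0 < Rs) (hPTx : 0 < PTx) (hPRx : 0 < PRx)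
    (hRD2D : 0 < RD2D)
    (h9 : Rs / RD2D < Ps / (PRx + PTx))
    (D : Finset α) (U : α → ℝ)
    (v : Finset α → ℝ)
    (hv : ∀ S : Finset α, v S = (∑ i ∈ S ∩ D, U i) - Ccost Ps Rs PTx PRx RD2D D S)
    (k : ℕ) (hk : 1 ≤ k) (S : Fin k → Finset α)
    (hne : ∀ i, (S i).Nonempty)
    (hdisj : ∀ i j, i ≠ j → Disjoint (S i) (S j)) :
    v (Finset.univ.sup S) ≥ ∑ i : Fin k, v (S i) :=
  value_superadditive_general Ps Rs PTx PRx RD2D hRs hPTx hPRx hRD2D h9 D U v hv k S hdisj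
end

section
/- (Theorem 1.) Assume Condition (9), i.e., R_s/R_D2D < P_s/(P_Rx + P_Tx). Then the coalitional game (N, v) with the multi-file value function v(S) = ∑_{m=1}^M ( ∑_{i ∈ S ∩ D_m} U_{i,m} − a·X_m·C_m(S) ) has a nonempty core: there exists a payoff vector x : N → ℝ with ∑_{i∈N} x_i = v(N) and ∑_{i∈S} x_i ≥ v(S) for every coalition S ⊆ N. -/
/-!
Each file gives a cost-sharing game in its own right, and `v` is the sum of these games, so a sum
of core allocations of the file games lies in the core of `v`. For a single file the cost depends
only on the number `k` of requesters in the coalition, and Condition (9) makes the average cost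
per requester nonincreasing in `k`: the one base-station download is shared by more users, while
each extra receiver adds only `P_Rx / R_D2D`. Splitting the cost of serving all of `D_m` equally
among `D_m` therefore charges any coalition at most its own cost.
-/

open Finset

section Core

variable {α : Type*} [Fintype α]

def IsInCore (v : Finset α → ℝ) (x : α → ℝ) : Prop :=
  ∑ i, x i = v univ ∧ ∀ S, v S ≤ ∑ i ∈ S, x i

theorem isInCore_sum {ι : Type*} (s : Finset ι) {v : ι → Finset α → ℝ}
    {x : ι → α → ℝ} (h : ∀ m ∈ s, IsInCore (v m) (x m)) :
    IsInCore (fun S => ∑ m ∈ s, v m S) (fun i => ∑ m ∈ s, x m i) := by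
  refine ⟨?_, fun S => ?_⟩
  · rw [sum_comm]
    exact sum_congr rfl fun m hm => (h m hm).1
  · rw [sum_comm]
    exact sum_le_sum fun m hm => (h m hm).2 S

variable [DecidableEq α]

def sharingGame (D : Finset α) (u : α → ℝ) (c : ℕ → ℝ) (S : Finset α) : ℝ :=
  ∑ i ∈ S ∩ D, u i - c #(S ∩ D)

noncomputable def equalCostShare (D : Finset α) (u : α → ℝ) (c : ℕ → ℝ) (i : α) : ℝ :=
  if i ∈ D then u i - c #D / #D else 0

theorem natCast_mul_div_self_of_zero {c : ℕ → ℝ} (hc0 : c 0 = 0) (n : ℕ) :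
    (n : ℝ) * (c n / n) = c n := by
  rcases Nat.eq_zero_or_pos n with rfl | hn
  · simp [hc0]
  · exact mul_div_cancel₀ _ (by positivity)

theorem natCast_mul_div_le_of_avg_antitone {c : ℕ → ℝ} (hc0 : c 0 = 0)
    (hc : ∀ k n : ℕ, k ≤ n → (k : ℝ) * c n ≤ n * c k) {k n : ℕ} (hkn : k ≤ n) :
    (k : ℝ) * (c n / n) ≤ c k := by
  rcases Nat.eq_zero_or_pos n with rfl | hn
  · simp [Nat.le_zero.mp hkn, hc0]
  · rw [mul_div_assoc', div_le_iff₀ (by positivity), mul_comm (c k)]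
    exact hc k n hkn

theorem isInCore_equalCostShare (D : Finset α) (u : α → ℝ) {c : ℕ → ℝ}
    (hc0 : c 0 = 0) (hc : ∀ k n : ℕ, k ≤ n → (k : ℝ) * c n ≤ n * c k) :
    IsInCore (sharingGame D u c) (equalCostShare D u c) := by
  have sum_share (S : Finset α) :
      ∑ i ∈ S, equalCostShare D u c i = ∑ i ∈ S ∩ D, u i - #(S ∩ D) * (c #D / #D) := by
    simp only [equalCostShare]
    rw [sum_ite_mem, sum_sub_distrib, sum_const, nsmul_eq_mul]
  refine ⟨?_, fun S => ?_⟩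
  · rw [sum_share, sharingGame, univ_inter, natCast_mul_div_self_of_zero hc0]
  · rw [sum_share, sharingGame]
    have := natCast_mul_div_le_of_avg_antitone hc0 hc
      (card_le_card (inter_subset_right (s₁ := S) (s₂ := D)))
    linarith

end Core

/-- `Ccost` as a function of the number `k` of requesters, with `A = P_s/R_s`,
`B = P_Tx/R_D2D`, `C = P_Rx/R_D2D`. -/
noncomputable def d2dCost (A B C : ℝ) (k : ℕ) : ℝ :=
  if k = 0 then 0 else if k = 1 then A else A + B + ((k : ℝ) - 1) * C

theorem Ccost_eq_d2dCost {α : Type*} [DecidableEq α] (Ps Rs PTx PRx RD2D : ℝ)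
    (D S : Finset α) :
    Ccost Ps Rs PTx PRx RD2D D S = d2dCost (Ps / Rs) (PTx / RD2D) (PRx / RD2D) #(S ∩ D) := by
  simp only [Ccost, d2dCost, card_eq_zero]

theorem d2dCost_add_two (A B C : ℝ) (k : ℕ) :
    d2dCost A B C (k + 2) = A + B - C + (k + 2) * C := by
  rw [d2dCost, if_neg (by omega), if_neg (by omega)]
  push_cast
  ring

/-- The average cost `d2dCost k / k` is nonincreasing in `k ≥ 1`. -/
theorem d2dCost_natCast_mul_le {A B C : ℝ} (hB : 0 ≤ B) (hBC : B + C ≤ A) {k n : ℕ}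
    (hkn : k ≤ n) : (k : ℝ) * d2dCost A B C n ≤ n * d2dCost A B C k := by
  obtain ⟨d, rfl⟩ := Nat.exists_eq_add_of_le hkn
  have hd : (0 : ℝ) ≤ d := d.cast_nonneg
  match k, d with
  | 0, _ => simp [d2dCost]
  | k + 1, 0 => rfl
  | 1, d + 1 =>
    rw [show 1 + (d + 1) = d + 2 by omega, d2dCost_add_two]
    simp only [d2dCost, Nat.cast_one, one_ne_zero, if_false, if_true]
    push_cast
    nlinarith
  | k + 2, d + 1 =>
    rw [show k + 2 + (d + 1) = (k + d + 1) + 2 by omega, d2dCost_add_two, d2dCost_add_two]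
    push_cast
    nlinarith

theorem multifile_core_nonempty_general
    {α : Type*} [Fintype α] [DecidableEq α]
    (Ps Rs PTx PRx RD2D : ℝ)
    (hRs : 0 < Rs) (hPTx : 0 < PTx) (hPRx : 0 < PRx)
    (hRD2D : 0 < RD2D)
    (h9 : Rs / RD2D < Ps / (PRx + PTx))
    (M : ℕ) (X : Fin M → ℝ) (hX : ∀ m, 0 < X m)
    (Dm : Fin M → Finset α) (U : α → Fin M → ℝ)
    (a : ℝ) (ha : 0 < a)
    (v : Finset α → ℝ)
    (hv : ∀ S : Finset α,
      v S = ∑ m : Fin M,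
        ((∑ i ∈ S ∩ Dm m, U i m) - a * X m * Ccost Ps Rs PTx PRx RD2D (Dm m) S)) :
    ∃ x : α → ℝ,
      (∑ i, x i = v Finset.univ) ∧
      (∀ S : Finset α, ∑ i ∈ S, x i ≥ v S) := by
  have hBC : PTx / RD2D + PRx / RD2D ≤ Ps / Rs := by
    rw [div_lt_div_iff₀ hRD2D (by positivity)] at h9
    rw [← add_div, div_le_div_iff₀ hRD2D hRs]
    linarith
  set cost : Fin M → ℕ → ℝ := fun m k =>
    a * X m * d2dCost (Ps / Rs) (PTx / RD2D) (PRx / RD2D) k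
  have hcore : ∀ m ∈ univ, IsInCore (sharingGame (Dm m) (U · m) (cost m))
      (equalCostShare (Dm m) (U · m) (cost m)) := fun m _ =>
    isInCore_equalCostShare _ _ (by simp [cost, d2dCost]) fun k n hkn => by
      simpa only [cost, mul_left_comm] using mul_le_mul_of_nonneg_left
        (d2dCost_natCast_mul_le (div_pos hPTx hRD2D).le hBC hkn) (mul_pos ha (hX m)).le
  have hv' : v = fun S => ∑ m, sharingGame (Dm m) (U · m) (cost m) S := by
    ext S
    simp only [hv, sharingGame, cost, Ccost_eq_d2dCost]
  rw [hv']
  exact ⟨_, isInCore_sum univ hcore⟩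

/-- Theorem 1: under Condition (9), the coalitional game `(N, v)` with the
multi-file value function `v(S) = ∑_m ( ∑_{i ∈ S ∩ D_m} U_{i,m} − a·X_m·C_m(S) )` has a
nonempty core. -/
theorem multifile_core_nonempty
    {α : Type*} [Fintype α] [DecidableEq α] [Nonempty α]
    (Ps Rs PTx PRx RD2D : ℝ)
    (hPs : 0 < Ps) (hRs : 0 < Rs) (hPTx : 0 < PTx) (hPRx : 0 < PRx)
    (hRD2D : 0 < RD2D)
    (h9 : Rs / RD2D < Ps / (PRx + PTx))
    (M : ℕ) (X : Fin M → ℝ) (hX : ∀ m, 0 < X m)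
    (Dm : Fin M → Finset α) (U : α → Fin M → ℝ)
    (a : ℝ) (ha : 0 < a)
    (v : Finset α → ℝ)
    (hv : ∀ S : Finset α,
      v S = ∑ m : Fin M,
        ((∑ i ∈ S ∩ Dm m, U i m) - a * X m * Ccost Ps Rs PTx PRx RD2D (Dm m) S)) :
    ∃ x : α → ℝ,
      (∑ i, x i = v Finset.univ) ∧
      (∀ S : Finset α, ∑ i ∈ S, x i ≥ v S) :=
  multifile_core_nonempty_general Ps Rs PTx PRx RD2D hRs hPTx hPRx hRD2D h9 M X hX Dm U a ha v hv
end

section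
/- (Theorem 2.) A partition P = {P_1, …, P_n} of N is D_c-stable if and only if the following two conditions hold: (1) for every P-compatible collection {S_1, …, S_k}, v(S_1 ∪ ⋯ ∪ S_k) ≥ ∑_{i=1}^k v(S_i); and (2) for every P-incompatible coalition S, ∑_{j : S ∩ P_j ≠ ∅} v(S ∩ P_j) ≥ v(S). -/
open Finset

variable {α : Type*} [Fintype α] [DecidableEq α]

/-- A partition of the player set `N`: a family of pairwise disjoint nonempty
subsets whose union is `N`. -/
def IsPartition (P : Finset (Finset α)) : Prop :=
  (∀ B ∈ P, B.Nonempty) ∧ (P : Set (Finset α)).PairwiseDisjoint id ∧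
    P.sup id = Finset.univ

/-- A collection in `N`: a family of pairwise disjoint nonempty subsets of `N`. -/
def IsCollection (C : Finset (Finset α)) : Prop :=
  (∀ B ∈ C, B.Nonempty) ∧ (C : Set (Finset α)).PairwiseDisjoint id

/-- The value of a collection (or partition): the sum of the values of its blocks. -/
def collVal (v : Finset α → ℝ) (C : Finset (Finset α)) : ℝ := ∑ B ∈ C, v B

/-- `S[P]`: the collection consisting of the nonempty sets among
`(S_1 ∪ ⋯ ∪ S_k) ∩ P_j`, for the blocks `P_j` of `P`. -/
def restrictColl (C P : Finset (Finset α)) : Finset (Finset α) :=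
  (P.image fun Pj => C.sup id ∩ Pj).filter fun B => B.Nonempty

/-- `P` is `D_c`-stable: `v(S[P]) ≥ v(S)` for every collection `S` in `N`. -/
def DcStable (v : Finset α → ℝ) (P : Finset (Finset α)) : Prop :=
  ∀ C : Finset (Finset α), IsCollection C →
    collVal v (restrictColl C P) ≥ collVal v C

/-- `P` is strictly `D_c`-stable: strict superadditivity for `P`-compatible
collections with at least two blocks, and strict gain from splitting any
`P`-incompatible coalition along `P`. -/
def StrictlyDcStable (v : Finset α → ℝ) (P : Finset (Finset α)) : Prop :=
  (∀ C : Finset (Finset α), IsCollection C → 2 ≤ C.card →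
      (∃ Pj ∈ P, C.sup id ⊆ Pj) → v (C.sup id) > ∑ B ∈ C, v B) ∧
  (∀ S : Finset α, (∀ Pj ∈ P, ¬ S ⊆ Pj) →
      (∑ Pj ∈ P.filter fun Pj => (S ∩ Pj).Nonempty, v (S ∩ Pj)) > v S)

/-! Splitting the union `U` of a collection along `P` gives `v(S[P]) = ∑_j v(U ∩ P_j)`, so
`D_c`-stability says `∑_i v(S_i) ≤ ∑_j v(U ∩ P_j)` for every collection. Condition (2) bounds each
`v(S_i)` by `∑_j v(S_i ∩ P_j)`, and condition (1), applied inside each block `P_j` to the collection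
of the sets `S_i ∩ P_j`, bounds `∑_i v(S_i ∩ P_j)` by `v(U ∩ P_j)`. Conversely, (1) is stability
tested on a `P`-compatible collection, where `S[P] = {U}`, and (2) is stability tested on `{S}`. -/

section

variable {α : Type*} [DecidableEq α] {v : Finset α → ℝ}

def collTrace (D : Finset (Finset α)) (A : Finset α) : Finset (Finset α) :=
  (D.image fun X => A ∩ X).filter fun B => B.Nonempty

theorem restrictColl_eq_collTrace (C P : Finset (Finset α)) :
    restrictColl C P = collTrace P (C.sup id) :=
  rfl

theorem sup_collTrace (D : Finset (Finset α)) (A : Finset α) :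
    (collTrace D A).sup id = A ∩ D.sup id := by
  ext x
  simp only [collTrace, mem_sup, mem_filter, mem_image, id_eq, mem_inter]
  constructor
  · rintro ⟨_, ⟨⟨X, hX, rfl⟩, -⟩, hx⟩
    exact ⟨(mem_inter.mp hx).1, X, hX, (mem_inter.mp hx).2⟩
  · rintro ⟨hxA, X, hX, hxX⟩
    have hx : x ∈ A ∩ X := mem_inter.mpr ⟨hxA, hxX⟩
    exact ⟨A ∩ X, ⟨⟨X, hX, rfl⟩, ⟨x, hx⟩⟩, hx⟩

theorem sum_filter_inter_nonempty (hv0 : v ∅ = 0) (D : Finset (Finset α)) (S : Finset α) :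
    ∑ X ∈ D.filter (fun X => (S ∩ X).Nonempty), v (S ∩ X) = ∑ X ∈ D, v (S ∩ X) := by
  refine sum_filter_of_ne fun X _ hX => nonempty_iff_ne_empty.mpr ?_
  rintro h
  exact hX (by rw [h, hv0])

theorem isCollection_collTrace {D : Finset (Finset α)}
    (hD : (D : Set (Finset α)).PairwiseDisjoint id) (A : Finset α) :
    IsCollection (collTrace D A) := by
  refine ⟨fun B hB => (mem_filter.mp hB).2, ?_⟩
  intro T₁ hT₁ T₂ hT₂ hne
  obtain ⟨X, hX, rfl⟩ := mem_image.mp (mem_filter.mp hT₁).1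
  obtain ⟨Y, hY, rfl⟩ := mem_image.mp (mem_filter.mp hT₂).1
  have hXY : X ≠ Y := by rintro rfl; exact hne rfl
  exact (hD hX hY hXY).mono inter_subset_right inter_subset_right

theorem collVal_collTrace (hv0 : v ∅ = 0) {D : Finset (Finset α)}
    (hD : (D : Set (Finset α)).PairwiseDisjoint id) (A : Finset α) :
    collVal v (collTrace D A) = ∑ X ∈ D, v (A ∩ X) := by
  rw [collVal, collTrace, filter_image, sum_image]
  · exact sum_filter_inter_nonempty hv0 D A
  · intro X hX Y hY h
    obtain ⟨x, hx⟩ := (mem_filter.mp hX).2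
    refine hD.elim (mem_filter.mp hX).1 (mem_filter.mp hY).1 fun hXY => ?_
    have hAXY : A ∩ X = A ∩ Y := h
    have hy : x ∈ A ∩ Y := hAXY ▸ hx
    exact disjoint_left.mp hXY (mem_inter.mp hx).2 (mem_inter.mp hy).2

theorem sum_inter_eq_of_subset (hv0 : v ∅ = 0) {P : Finset (Finset α)}
    (hP : (P : Set (Finset α)).PairwiseDisjoint id) {S Pj : Finset α} (hPj : Pj ∈ P)
    (hS : S ⊆ Pj) : ∑ Q ∈ P, v (S ∩ Q) = v S := by
  rw [sum_eq_single_of_mem Pj hPj, inter_eq_left.mpr hS]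
  intro Q hQ hne
  have hSQ : Disjoint S Q := (hP hPj hQ hne.symm).mono_left hS
  rw [disjoint_iff_inter_eq_empty.mp hSQ, hv0]

theorem dcStable_iff_collVal_le (hv0 : v ∅ = 0) {P : Finset (Finset α)}
    (hP : (P : Set (Finset α)).PairwiseDisjoint id) :
    DcStable v P ↔
      ∀ C : Finset (Finset α), IsCollection C → collVal v C ≤ ∑ Q ∈ P, v (C.sup id ∩ Q) := by
  simp only [DcStable, restrictColl_eq_collTrace, collVal_collTrace hv0 hP, ge_iff_le]

theorem le_sum_inter_of_forall_collVal_le (hv0 : v ∅ = 0) {P : Finset (Finset α)}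
    (h : ∀ C : Finset (Finset α), IsCollection C → collVal v C ≤ ∑ Q ∈ P, v (C.sup id ∩ Q))
    (S : Finset α) :
    v S ≤ ∑ Q ∈ P, v (S ∩ Q) := by
  obtain rfl | hS := S.eq_empty_or_nonempty
  · simp [hv0]
  have hSingleton : IsCollection ({S} : Finset (Finset α)) := ⟨by simpa using hS, by simp⟩
  simpa [collVal] using h {S} hSingleton

theorem le_sum_inter_of_forall_incompatible (hv0 : v ∅ = 0) {P : Finset (Finset α)}
    (hP : (P : Set (Finset α)).PairwiseDisjoint id)
    (h : ∀ S : Finset α, (∀ Pj ∈ P, ¬ S ⊆ Pj) →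
      (∑ Pj ∈ P.filter fun Pj => (S ∩ Pj).Nonempty, v (S ∩ Pj)) ≥ v S)
    (S : Finset α) : v S ≤ ∑ Q ∈ P, v (S ∩ Q) := by
  by_cases hcomp : ∃ Pj ∈ P, S ⊆ Pj
  · obtain ⟨Pj, hPj, hS⟩ := hcomp
    exact (sum_inter_eq_of_subset hv0 hP hPj hS).ge
  · push Not at hcomp
    exact (sum_filter_inter_nonempty hv0 P S) ▸ h S hcomp

theorem sum_inter_le_of_forall_compatible (hv0 : v ∅ = 0) {P C : Finset (Finset α)}
    (hC : (C : Set (Finset α)).PairwiseDisjoint id)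
    (h : ∀ C : Finset (Finset α), IsCollection C →
      (∃ Pj ∈ P, C.sup id ⊆ Pj) → v (C.sup id) ≥ ∑ B ∈ C, v B)
    {Q : Finset α} (hQ : Q ∈ P) : ∑ B ∈ C, v (B ∩ Q) ≤ v (C.sup id ∩ Q) := by
  have hsup : (collTrace C Q).sup id = C.sup id ∩ Q := by rw [sup_collTrace, inter_comm]
  have := h (collTrace C Q) (isCollection_collTrace hC Q) ⟨Q, hQ, hsup ▸ inter_subset_right⟩
  rw [hsup, ← collVal, collVal_collTrace hv0 hC] at this
  simpa only [inter_comm Q] using this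

end

theorem dcStable_iff_general {α : Type*} [Fintype α] [DecidableEq α]
    (v : Finset α → ℝ) (hv0 : v ∅ = 0)
    (P : Finset (Finset α)) (hP : IsPartition P) :
    DcStable v P ↔
      ((∀ C : Finset (Finset α), IsCollection C →
          (∃ Pj ∈ P, C.sup id ⊆ Pj) → v (C.sup id) ≥ ∑ B ∈ C, v B) ∧
        (∀ S : Finset α, (∀ Pj ∈ P, ¬ S ⊆ Pj) →
          (∑ Pj ∈ P.filter fun Pj => (S ∩ Pj).Nonempty, v (S ∩ Pj)) ≥ v S)) := by
  have hPd := hP.2.1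
  rw [dcStable_iff_collVal_le hv0 hPd]
  refine ⟨fun h => ⟨?_, ?_⟩, fun ⟨h1, h2⟩ C hC => ?_⟩
  · rintro C hC ⟨Pj, hPj, hU⟩
    have := h C hC
    rwa [sum_inter_eq_of_subset hv0 hPd hPj hU] at this
  · intro S _
    rw [sum_filter_inter_nonempty hv0]
    exact le_sum_inter_of_forall_collVal_le hv0 h S
  · calc collVal v C = ∑ B ∈ C, v B := rfl
      _ ≤ ∑ B ∈ C, ∑ Q ∈ P, v (B ∩ Q) :=
          sum_le_sum fun B _ => le_sum_inter_of_forall_incompatible hv0 hPd h2 B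
      _ = ∑ Q ∈ P, ∑ B ∈ C, v (B ∩ Q) := sum_comm
      _ ≤ ∑ Q ∈ P, v (C.sup id ∩ Q) :=
          sum_le_sum fun Q hQ => sum_inter_le_of_forall_compatible hv0 hC.2 h1 hQ

/-- Theorem 2: a partition `P` of `N` is `D_c`-stable iff
(1) for every `P`-compatible collection `{S_1, …, S_k}`,
`v(S_1 ∪ ⋯ ∪ S_k) ≥ ∑_i v(S_i)`, and
(2) for every `P`-incompatible coalition `S`,
`∑_{j : S ∩ P_j ≠ ∅} v(S ∩ P_j) ≥ v(S)`. -/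
theorem dcStable_iff {α : Type*} [Fintype α] [DecidableEq α] [Nonempty α]
    (v : Finset α → ℝ) (hv0 : v ∅ = 0)
    (P : Finset (Finset α)) (hP : IsPartition P) :
    DcStable v P ↔
      ((∀ C : Finset (Finset α), IsCollection C →
          (∃ Pj ∈ P, C.sup id ⊆ Pj) → v (C.sup id) ≥ ∑ B ∈ C, v B) ∧
        (∀ S : Finset α, (∀ Pj ∈ P, ¬ S ⊆ Pj) →
          (∑ Pj ∈ P.filter fun Pj => (S ∩ Pj).Nonempty, v (S ∩ Pj)) ≥ v S)) :=
  dcStable_iff_general v hv0 P hP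
end

section
/- (Proposition 1.) If P is a D_c-stable partition of N, then P attains the maximum value among all partitions of N: v(P) = max{ v(Q) : Q is a partition of N }, where the value of a partition is the sum of the values of its blocks. -/
open Finset

variable {α : Type*} [Fintype α] [DecidableEq α]

theorem IsPartition.isCollection {P : Finset (Finset α)} (hP : IsPartition P) :
    IsCollection P :=
  ⟨hP.1, hP.2.1⟩

theorem restrictColl_eq_self {C P : Finset (Finset α)} (hC : C.sup id = univ)
    (hP : ∀ B ∈ P, B.Nonempty) : restrictColl C P = P := by
  simp only [restrictColl, hC, univ_inter, image_id']
  exact filter_true_of_mem hP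

theorem collVal_le_of_dcStable {v : Finset α → ℝ} {P Q : Finset (Finset α)}
    (hP : IsPartition P) (hstab : DcStable v P) (hQ : IsPartition Q) :
    collVal v Q ≤ collVal v P := by
  simpa only [restrictColl_eq_self hQ.2.2 hP.1] using hstab Q hQ.isCollection

theorem dcStable_attains_max_general {α : Type*} [Fintype α] [DecidableEq α]
    (v : Finset α → ℝ)
    (P : Finset (Finset α)) (hP : IsPartition P) (hstab : DcStable v P) :
    IsGreatest { x : ℝ | ∃ Q : Finset (Finset α), IsPartition Q ∧ collVal v Q = x }
      (collVal v P) := by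
  refine ⟨⟨P, hP, rfl⟩, ?_⟩
  rintro _ ⟨Q, hQ, rfl⟩
  exact collVal_le_of_dcStable hP hstab hQ

/-- Proposition 1: a `D_c`-stable partition `P` attains the maximum
value among all partitions of `N`. -/
theorem dcStable_attains_max {α : Type*} [Fintype α] [DecidableEq α] [Nonempty α]
    (v : Finset α → ℝ) (hv0 : v ∅ = 0)
    (P : Finset (Finset α)) (hP : IsPartition P) (hstab : DcStable v P) :
    IsGreatest { x : ℝ | ∃ Q : Finset (Finset α), IsPartition Q ∧ collVal v Q = x }
      (collVal v P) :=
  dcStable_attains_max_general v P hP hstab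
end
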